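/- For every (0,k,ℓ) ∈ X_diff (i.e. k ≥ 1 and k + ℓ ≤ C₁), the boundary value of the difference function is D(0,k,ℓ) = h₁/μ₁ − (max(ℓ+1, C₂)/C₂)·(h₂/μ₂); equivalently, D(0,k,ℓ) = h₁/μ₁ − h₂/μ₂ if ℓ < C₂ and D(0,k,ℓ) = h₁/μ₁ − (ℓ+1)·h₂/(C₂·μ₂) if ℓ ≥ C₂. -/

import Mathlib

/-- Overall service rate `d(k,ℓ) = k·μ₁ + min(ℓ,C₂)·μ₂`. -/
noncomputable def dRate (C₂ : ℕ) (μ₁ μ₂ : ℝ) (k ℓ : ℕ) : ℝ :=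
  (k : ℝ) * μ₁ + ((min ℓ C₂ : ℕ) : ℝ) * μ₂

/-- Membership of `(i,k,ℓ)` in the state space `X`. -/
def memX (C₁ : ℕ) (i k ℓ : ℕ) : Prop :=
  (i = 0 ∧ k + ℓ < C₁) ∨ k + ℓ = C₁

/-- `v` satisfies the optimality (Bellman) equations of the clearing system.
Terms whose coefficient `k·μ₁` or `min(ℓ,C₂)·μ₂` vanishes contribute `0`,
matching the convention that such summands are omitted. -/
def IsValue (C₁ C₂ : ℕ) (μ₁ μ₂ h₀ h₁ h₂ : ℝ) (v : ℕ → ℕ → ℕ → ℝ) : Prop :=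
  v 0 0 0 = 0 ∧
  (∀ k ℓ : ℕ, k + ℓ ≤ C₁ → ¬(k = 0 ∧ ℓ = 0) →
    v 0 k ℓ = ((k : ℝ) * h₁ + (ℓ : ℝ) * h₂) / dRate C₂ μ₁ μ₂ k ℓ
      + ((k : ℝ) * μ₁ / dRate C₂ μ₁ μ₂ k ℓ) * v 0 (k - 1) ℓ
      + (((min ℓ C₂ : ℕ) : ℝ) * μ₂ / dRate C₂ μ₁ μ₂ k ℓ) * v 0 k (ℓ - 1)) ∧
  (∀ i k ℓ : ℕ, k + ℓ = C₁ →
    v (i + 1) k ℓ =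
      (((i : ℝ) + 1) * h₀ + (k : ℝ) * h₁ + (ℓ : ℝ) * h₂) / dRate C₂ μ₁ μ₂ k ℓ
      + ((k : ℝ) * μ₁ / dRate C₂ μ₁ μ₂ k ℓ) *
          min (v i k ℓ) (v i (k - 1) (ℓ + 1))
      + (((min ℓ C₂ : ℕ) : ℝ) * μ₂ / dRate C₂ μ₁ μ₂ k ℓ) *
          min (v i (k + 1) (ℓ - 1)) (v i k ℓ))

/-- The difference `D(i,k,ℓ) = v(i,k,ℓ) − v(i,k−1,ℓ+1)`. -/
noncomputable def Dv (v : ℕ → ℕ → ℕ → ℝ) (i k ℓ : ℕ) : ℝ :=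
  v i k ℓ - v i (k - 1) (ℓ + 1)

/-!
On the boundary `i = 0` the optimality equations contain no minimisation, so they form a
triangular linear system in `k + ℓ` with a unique solution. That solution separates:
`v(0,k,ℓ) = k·h₁/μ₁ + G(ℓ)`, where `G(ℓ) = Σ_{j ≤ ℓ} j·h₂/(min(j,C₂)·μ₂)` is the expected
holding cost of emptying `ℓ` jobs from the second station. Hence
`D(0,k,ℓ) = h₁/μ₁ − (ℓ+1)·h₂/(min(ℓ+1,C₂)·μ₂)`, and `(ℓ+1)/min(ℓ+1,C₂) = max(ℓ+1,C₂)/C₂`.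
-/

noncomputable def stationTwoCost (C₂ : ℕ) (μ₂ h₂ : ℝ) (ℓ : ℕ) : ℝ :=
  ∑ j ∈ Finset.range ℓ, ((j : ℝ) + 1) * h₂ / (((min (j + 1) C₂ : ℕ) : ℝ) * μ₂)

theorem stationTwoCost_succ (C₂ : ℕ) (μ₂ h₂ : ℝ) (ℓ : ℕ) :
    stationTwoCost C₂ μ₂ h₂ (ℓ + 1)
      = stationTwoCost C₂ μ₂ h₂ ℓ + ((ℓ : ℝ) + 1) * h₂ / (((min (ℓ + 1) C₂ : ℕ) : ℝ) * μ₂) :=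
  Finset.sum_range_succ _ _

theorem min_mul_stationTwoCost_sub {C₂ : ℕ} (hC₂ : 1 ≤ C₂) {μ₂ : ℝ} (hμ₂ : μ₂ ≠ 0)
    (h₂ : ℝ) (ℓ : ℕ) :
    ((min ℓ C₂ : ℕ) : ℝ) * μ₂ * (stationTwoCost C₂ μ₂ h₂ ℓ - stationTwoCost C₂ μ₂ h₂ (ℓ - 1))
      = ℓ * h₂ := by
  cases ℓ with
  | zero => simp
  | succ ℓ =>
    have hmin : ((min (ℓ + 1) C₂ : ℕ) : ℝ) ≠ 0 := by positivity
    rw [Nat.add_sub_cancel, stationTwoCost_succ, add_sub_cancel_left]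
    field_simp
    push_cast
    ring

noncomputable def boundaryValue (C₂ : ℕ) (μ₁ μ₂ h₁ h₂ : ℝ) (k ℓ : ℕ) : ℝ :=
  k * h₁ / μ₁ + stationTwoCost C₂ μ₂ h₂ ℓ

theorem dRate_pos {C₂ : ℕ} (hC₂ : 1 ≤ C₂) {μ₁ μ₂ : ℝ} (hμ₁ : 0 < μ₁) (hμ₂ : 0 < μ₂)
    {k ℓ : ℕ} (hkℓ : ¬(k = 0 ∧ ℓ = 0)) : 0 < dRate C₂ μ₁ μ₂ k ℓ := by
  unfold dRate
  rcases Nat.eq_zero_or_pos k with rfl | hk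
  · have : 0 < min ℓ C₂ := by omega
    simp only [Nat.cast_zero, zero_mul, zero_add]
    positivity
  · positivity

theorem IsValue.dRate_mul_boundary {C₁ C₂ : ℕ} (hC₂ : 1 ≤ C₂) {μ₁ μ₂ h₀ h₁ h₂ : ℝ}
    (hμ₁ : 0 < μ₁) (hμ₂ : 0 < μ₂) {v : ℕ → ℕ → ℕ → ℝ} (hv : IsValue C₁ C₂ μ₁ μ₂ h₀ h₁ h₂ v)
    {k ℓ : ℕ} (hle : k + ℓ ≤ C₁) (hkℓ : ¬(k = 0 ∧ ℓ = 0)) :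
    dRate C₂ μ₁ μ₂ k ℓ * v 0 k ℓ
      = k * h₁ + ℓ * h₂ + k * μ₁ * v 0 (k - 1) ℓ + ((min ℓ C₂ : ℕ) : ℝ) * μ₂ * v 0 k (ℓ - 1) := by
  have hd := (dRate_pos hC₂ hμ₁ hμ₂ hkℓ).ne'
  rw [hv.2.1 k ℓ hle hkℓ]
  field_simp

theorem dRate_mul_boundaryValue {C₂ : ℕ} (hC₂ : 1 ≤ C₂) {μ₁ μ₂ : ℝ} (hμ₁ : μ₁ ≠ 0)
    (hμ₂ : μ₂ ≠ 0) (h₁ h₂ : ℝ) (k ℓ : ℕ) :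
    dRate C₂ μ₁ μ₂ k ℓ * boundaryValue C₂ μ₁ μ₂ h₁ h₂ k ℓ
      = k * h₁ + ℓ * h₂ + k * μ₁ * boundaryValue C₂ μ₁ μ₂ h₁ h₂ (k - 1) ℓ
        + ((min ℓ C₂ : ℕ) : ℝ) * μ₂ * boundaryValue C₂ μ₁ μ₂ h₁ h₂ k (ℓ - 1) := by
  have hstep := min_mul_stationTwoCost_sub hC₂ hμ₂ h₂ ℓ
  have hk : (k : ℝ) * μ₁ * (k * h₁ / μ₁ - (k - 1 : ℕ) * h₁ / μ₁) = k * h₁ := by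
    cases k with
    | zero => simp
    | succ k =>
      push_cast
      field_simp
      ring
  simp only [boundaryValue, dRate]
  linear_combination hstep + hk

theorem IsValue.boundary_eq {C₁ C₂ : ℕ} (hC₂ : 1 ≤ C₂) {μ₁ μ₂ h₀ h₁ h₂ : ℝ}
    (hμ₁ : 0 < μ₁) (hμ₂ : 0 < μ₂) {v : ℕ → ℕ → ℕ → ℝ} (hv : IsValue C₁ C₂ μ₁ μ₂ h₀ h₁ h₂ v)
    {k ℓ : ℕ} (hle : k + ℓ ≤ C₁) :
    v 0 k ℓ = boundaryValue C₂ μ₁ μ₂ h₁ h₂ k ℓ := by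
  induction hn : k + ℓ using Nat.strong_induction_on generalizing k ℓ with
  | _ n ih =>
  by_cases h00 : k = 0 ∧ ℓ = 0
  · obtain ⟨rfl, rfl⟩ := h00
    simpa [boundaryValue, stationTwoCost] using hv.1
  have hleft : (k : ℝ) * μ₁ * v 0 (k - 1) ℓ
      = k * μ₁ * boundaryValue C₂ μ₁ μ₂ h₁ h₂ (k - 1) ℓ := by
    rcases Nat.eq_zero_or_pos k with rfl | hk
    · simp
    · rw [ih (k - 1 + ℓ) (by omega) (by omega) rfl]
  have hright : ((min ℓ C₂ : ℕ) : ℝ) * μ₂ * v 0 k (ℓ - 1)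
      = ((min ℓ C₂ : ℕ) : ℝ) * μ₂ * boundaryValue C₂ μ₁ μ₂ h₁ h₂ k (ℓ - 1) := by
    rcases Nat.eq_zero_or_pos ℓ with rfl | hℓ
    · simp
    · rw [ih (k + (ℓ - 1)) (by omega) (by omega) rfl]
  apply mul_left_cancel₀ (dRate_pos hC₂ hμ₁ hμ₂ h00).ne'
  rw [hv.dRate_mul_boundary hC₂ hμ₁ hμ₂ hle h00, hleft, hright,
    dRate_mul_boundaryValue hC₂ hμ₁.ne' hμ₂.ne' h₁ h₂ k ℓ]

theorem Nat.cast_div_min_eq_cast_max_div {a c : ℕ} (ha : 0 < a) (hc : 0 < c) :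
    (a : ℝ) / (min a c : ℕ) = (max a c : ℕ) / c := by
  have hmin : 0 < min a c := lt_min ha hc
  rw [div_eq_div_iff (by positivity) (by positivity)]
  norm_cast
  rw [← min_mul_max a c]
  ring

theorem stmt8_general
    (C₁ C₂ : ℕ) (hC₂pos : 1 ≤ C₂)
    (μ₁ μ₂ h₀ h₁ h₂ : ℝ)
    (hμ₁ : 0 < μ₁) (hμ₂ : 0 < μ₂)
    (v : ℕ → ℕ → ℕ → ℝ) (hv : IsValue C₁ C₂ μ₁ μ₂ h₀ h₁ h₂ v)
 :
    ∀ k ℓ : ℕ, 1 ≤ k → k + ℓ ≤ C₁ →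
      Dv v 0 k ℓ = h₁ / μ₁ - ((max (ℓ + 1) C₂ : ℕ) : ℝ) / (C₂ : ℝ) * (h₂ / μ₂) := by
  intro k ℓ hk hle
  obtain ⟨k, rfl⟩ : ∃ k', k = k' + 1 := ⟨k - 1, by omega⟩
  have hmin : ((min (ℓ + 1) C₂ : ℕ) : ℝ) ≠ 0 := by positivity
  rw [Dv, Nat.add_sub_cancel, hv.boundary_eq hC₂pos hμ₁ hμ₂ hle,
    hv.boundary_eq hC₂pos hμ₁ hμ₂ (by omega), boundaryValue, boundaryValue, stationTwoCost_succ,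
    ← Nat.cast_div_min_eq_cast_max_div ℓ.succ_pos hC₂pos]
  field_simp
  push_cast
  ring

theorem stmt8
    (C₁ C₂ : ℕ) (hC₂pos : 1 ≤ C₂) (hC : C₂ < C₁)
    (μ₁ μ₂ h₀ h₁ h₂ : ℝ)
    (hμ₁ : 0 < μ₁) (hμ₂ : 0 < μ₂)
    (hh₀ : 0 < h₀) (hh₁ : 0 < h₁) (hh₂ : 0 < h₂)
    (v : ℕ → ℕ → ℕ → ℝ) (hv : IsValue C₁ C₂ μ₁ μ₂ h₀ h₁ h₂ v)
 :
    ∀ k ℓ : ℕ, 1 ≤ k → k + ℓ ≤ C₁ →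
      Dv v 0 k ℓ = h₁ / μ₁ - ((max (ℓ + 1) C₂ : ℕ) : ℝ) / (C₂ : ℝ) * (h₂ / μ₂) :=
  stmt8_general C₁ C₂ hC₂pos μ₁ μ₂ h₀ h₁ h₂ hμ₁ hμ₂ v hv
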